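/- In the matrix-multiplication reduction instance: let A, B be subsets of {1,...,n}^2, and define for each atom of Q+ a relation by the assignment functions f_A (using V_x, V_z) or f_B (using V_y, V_z) depending on whether the atom's variables are disjoint from V_y or from V_x. Then the constructed instance satisfies every FD U -> v in Delta_{Q+}: if v is assigned value a (resp. c, b, (a,c), (c,b)), some u in U is assigned a value determining it. -/
import Mathlib


/-- Values used in the matrix-multiplication reduction: `⊥`, `a`-values,
`b`-values, `c`-values, and the pairs `(a,c)` and `(c,b)`. -/
inductive MMVal where
  | bot : MMVal
  | valA : ℕ → MMVal
  | valB : ℕ → MMVal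
  | valC : ℕ → MMVal
  | pairAC : ℕ → ℕ → MMVal
  | pairCB : ℕ → ℕ → MMVal
deriving DecidableEq

/- The assignment function `f_A` for a tuple `(a, c) ∈ A`. -/
open Classical in
noncomputable def fA {Var : Type*} (Vx Vz : Set Var) (v : Var) (a c : ℕ) : MMVal :=
  if v ∈ Vx ∧ v ∉ Vz then .valA a
  else if v ∈ Vz ∧ v ∉ Vx then .valC c
  else if v ∈ Vx ∧ v ∈ Vz then .pairAC a c
  else .bot

/- The assignment function `f_B` for a tuple `(c, b) ∈ B`. -/
open Classical in
noncomputable def fB {Var : Type*} (Vy Vz : Set Var) (v : Var) (c b : ℕ) : MMVal :=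
  if v ∈ Vz ∧ v ∉ Vy then .valC c
  else if v ∈ Vy ∧ v ∉ Vz then .valB b
  else if v ∈ Vy ∧ v ∈ Vz then .pairCB c b
  else .bot

/-- A set of tuples (given as assignments) satisfies the FD `U → v`: any two
tuples agreeing on `U` agree on `v`. -/
def FDSat {Var : Type*} (S : Set (Var → MMVal)) (U : Set Var) (v : Var) : Prop :=
  ∀ μ ∈ S, ∀ ν ∈ S, (∀ u ∈ U, μ u = ν u) → μ v = ν v

lemma fA_eqA {Var : Type*} {Vx Vz : Set Var} {u : Var} {a c a' c' : ℕ} (hu : u ∈ Vx)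
    (h : fA Vx Vz u a c = fA Vx Vz u a' c') : a = a' := by
  by_cases hz : u ∈ Vz <;> simp [fA, hu, hz] at h <;> tauto

lemma fA_eqC {Var : Type*} {Vx Vz : Set Var} {u : Var} {a c a' c' : ℕ} (hu : u ∈ Vz)
    (h : fA Vx Vz u a c = fA Vx Vz u a' c') : c = c' := by
  by_cases hx : u ∈ Vx <;> simp [fA, hu, hx] at h <;> tauto

lemma fB_eqC {Var : Type*} {Vy Vz : Set Var} {u : Var} {c b c' b' : ℕ} (hu : u ∈ Vz)
    (h : fB Vy Vz u c b = fB Vy Vz u c' b') : c = c' := by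
  by_cases hy : u ∈ Vy <;> simp [fB, hu, hy] at h <;> tauto

lemma fB_eqB {Var : Type*} {Vy Vz : Set Var} {u : Var} {c b c' b' : ℕ} (hu : u ∈ Vy)
    (h : fB Vy Vz u c b = fB Vy Vz u c' b') : b = b' := by
  by_cases hz : u ∈ Vz <;> simp [fB, hu, hz] at h <;> tauto

/-- In the matrix-multiplication reduction instance, built from
`A, B ⊆ {1,...,n}²` using `f_A` on atoms disjoint from `V_y` and `f_B` on atoms
disjoint from `V_x`, every FD `U → v` of `Δ_{Q⁺}` is satisfied in every atom
containing `U ∪ {v}`, given the role-set properties of `V_x, V_y, V_z`. -/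
theorem mm_reduction_instance_satisfies_fds
    {Var : Type*}
    (atoms : Set (Set Var)) (Δ : Set (Set Var × Var))
    (Vx Vy Vz : Set Var) (n : ℕ) (A B : Set (ℕ × ℕ))
    (hA : A ⊆ Set.Icc 1 n ×ˢ Set.Icc 1 n)
    (hB : B ⊆ Set.Icc 1 n ×ˢ Set.Icc 1 n)
    (hroles : ∀ U v, (U, v) ∈ Δ →
      (v ∈ Vx → (U ∩ Vx).Nonempty) ∧
      (v ∈ Vy → (U ∩ Vy).Nonempty) ∧
      (v ∈ Vz → (U ∩ Vz).Nonempty))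
    (hdisj : ∀ e ∈ atoms, e ∩ Vx = ∅ ∨ e ∩ Vy = ∅)
    (rel : Set Var → Set (Var → MMVal))
    (hrel : ∀ e ∈ atoms,
      (e ∩ Vy = ∅ ∧ rel e = {μ | ∃ p ∈ A, μ = fun v => fA Vx Vz v p.1 p.2}) ∨
      (e ∩ Vx = ∅ ∧ rel e = {μ | ∃ p ∈ B, μ = fun v => fB Vy Vz v p.1 p.2})) :
    ∀ U v, (U, v) ∈ Δ → ∀ e ∈ atoms, U ∪ {v} ⊆ e → FDSat (rel e) U v := by
  intro U v hUv e he hsub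
  obtain ⟨hx', hy', hz'⟩ := hroles U v hUv
  rcases hrel e he with ⟨hy, hre⟩ | ⟨hxe, hre⟩
  · rw [hre]
    rintro μ ⟨⟨a, c⟩, hac, rfl⟩ ν ⟨⟨a', c'⟩, hac', rfl⟩ hag
    by_cases hvx : v ∈ Vx <;> by_cases hvz : v ∈ Vz <;> simp [fA, hvx, hvz]
    · obtain ⟨u1, hu1U, hu1⟩ := hx' hvx
      obtain ⟨u2, hu2U, hu2⟩ := hz' hvz
      exact ⟨fA_eqA hu1 (hag u1 hu1U), fA_eqC hu2 (hag u2 hu2U)⟩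
    · obtain ⟨u1, hu1U, hu1⟩ := hx' hvx
      exact fA_eqA hu1 (hag u1 hu1U)
    · obtain ⟨u2, hu2U, hu2⟩ := hz' hvz
      exact fA_eqC hu2 (hag u2 hu2U)
  · rw [hre]
    rintro μ ⟨⟨c, b⟩, hcb, rfl⟩ ν ⟨⟨c', b'⟩, hcb', rfl⟩ hag
    by_cases hvy : v ∈ Vy <;> by_cases hvz : v ∈ Vz <;> simp [fB, hvy, hvz]
    · obtain ⟨u1, hu1U, hu1⟩ := hz' hvz
      obtain ⟨u2, hu2U, hu2⟩ := hy' hvy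
      exact ⟨fB_eqC hu1 (hag u1 hu1U), fB_eqB hu2 (hag u2 hu2U)⟩
    · obtain ⟨u2, hu2U, hu2⟩ := hy' hvy
      exact fB_eqB hu2 (hag u2 hu2U)
    · obtain ⟨u1, hu1U, hu1⟩ := hz' hvz
      exact fB_eqC hu1 (hag u1 hu1U)
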